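/- For every s ∈ ℕ there exist constants C > 0 and B₀ ∈ (1,2) such that for every B ∈ (1, B₀) and every t > 0, | 2 log B · Σ_{j=-∞}^{∞} w_s(tB^{-2j})² − 2^{-2s}Γ(2s) | ≤ C · 2^{-2s}Γ(2s) · (B−1)² log(1/(B−1)). Equivalently, Λ_{B,s} m_B ≤ Σ_{j∈ℤ} |w_s(tB^{-2j})|² ≤ Λ_{B,s} M_B for all t > 0, where Λ_{B,s} = 2^{-2s}Γ(2s)/(2 log B) and m_B = 1 − O((B−1)² log(1/(B−1))), M_B = 1 + O((B−1)² log(1/(B−1))) as B → 1⁺. -/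

import Mathlib

/-!
With `u = log x`, `w_s(t B^{-2j})² = F(log t - 2j log B)` for `F(u) = exp(2su - 2e^u)`, and the
substitution `y = e^u` gives `∫ F = ∫₀^∞ y^{2s-1} e^{-2y} dy = Γ(2s) / 2^{2s}`. For `h = 2 log B`,
`h Σ_j F(log t + jh)` is the sum of the trapezoidal approximations of `∫ F` over the cells
`[a, a + h]` of the grid. Integrating by parts twice, the error on one cell is
`∫ (x - a)(a + h - x)/2 · F''(x) dx`, and the kernel is at most `h²/8`; summing over the cells, the
total error is at most `h²/8 · ‖F''‖₁ ≤ (B - 1)²/2 · ‖F''‖₁`.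
-/

noncomputable section
open MeasureTheory Real

def wgt (s : ℕ) (x : ℝ) : ℝ := x ^ s * Real.exp (-x)

open Set intervalIntegral
open scoped Interval

section Trapezoid

variable {f f' f'' : ℝ → ℝ} {a b h : ℝ}

theorem trapezoid_sub_integral_eq (hf : ∀ x ∈ [[a, b]], HasDerivAt f (f' x) x)
    (hf' : ∀ x ∈ [[a, b]], HasDerivAt f' (f'' x) x) (hf'' : IntervalIntegrable f'' volume a b) :
    (b - a) / 2 * (f a + f b) - ∫ x in a..b, f x =
      ∫ x in a..b, (x - a) * (b - x) / 2 * f'' x := by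
  have hf'c : ContinuousOn f' [[a, b]] := fun x hx => (hf' x hx).continuousAt.continuousWithinAt
  have hkernel : ∀ x ∈ [[a, b]],
      HasDerivAt (fun x => (x - a) * (b - x) / 2) ((a + b) / 2 - x) x := fun x _ =>
    ((((hasDerivAt_id' x).sub_const a).mul ((hasDerivAt_id' x).const_sub b)).div_const
      2).congr_deriv (by ring)
  have hlinear : ∀ x ∈ [[a, b]], HasDerivAt (fun x => (a + b) / 2 - x) (-1) x :=
    fun x _ => (hasDerivAt_id x).const_sub _
  rw [integral_mul_deriv_eq_deriv_mul hkernel hf'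
      ((continuous_const.sub continuous_id).intervalIntegrable _ _) hf'',
    integral_mul_deriv_eq_deriv_mul hlinear hf intervalIntegrable_const
      hf'c.intervalIntegrable]
  simp only [neg_one_mul, intervalIntegral.integral_neg]
  ring

theorem abs_trapezoid_sub_integral_le (hab : a ≤ b) (hf : ∀ x ∈ [[a, b]], HasDerivAt f (f' x) x)
    (hf' : ∀ x ∈ [[a, b]], HasDerivAt f' (f'' x) x) (hf'' : IntervalIntegrable f'' volume a b) :
    |(b - a) / 2 * (f a + f b) - ∫ x in a..b, f x| ≤ (b - a) ^ 2 / 8 * ∫ x in a..b, |f'' x| := by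
  rw [trapezoid_sub_integral_eq hf hf' hf'', ← intervalIntegral.integral_const_mul]
  refine (abs_integral_le_integral_abs hab).trans <| integral_mono_on hab ?_ ?_ fun x hx => ?_
  · exact (hf''.continuousOn_mul (by fun_prop)).abs
  · exact hf''.abs.const_mul _
  · have hkernel : 0 ≤ (x - a) * (b - x) / 2 := by nlinarith [hx.1, hx.2]
    rw [abs_mul, abs_of_nonneg hkernel]
    exact mul_le_mul_of_nonneg_right (by nlinarith [sq_nonneg (2 * x - a - b)]) (abs_nonneg _)

theorem MeasureTheory.Integrable.hasSum_intervalIntegral_add_mul (hfi : Integrable f) (a : ℝ)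
    (hh : 0 < h) :
    HasSum (fun n : ℤ => ∫ x in a + n * h..a + (n + 1) * h, f x) (∫ x, f x) := by
  have hle : ∀ n : ℤ, a + n * h ≤ a + (n + 1) * h := fun n => by linarith
  simp_rw [integral_of_le (hle _)]
  have hcover := iUnion_Ioc_add_zsmul hh a
  have hdisj := pairwise_disjoint_Ioc_add_zsmul a h
  simp only [zsmul_eq_mul, Int.cast_add, Int.cast_one] at hcover hdisj
  rw [← setIntegral_univ, ← hcover]
  exact hasSum_integral_iUnion (fun _ => measurableSet_Ioc) hdisj hfi.integrableOn

theorem abs_mul_tsum_sub_integral_le (hf : ∀ x, HasDerivAt f (f' x) x)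
    (hf' : ∀ x, HasDerivAt f' (f'' x) x) (hfi : Integrable f) (hf''i : Integrable f'')
    (hsum : Summable fun n : ℤ => f (a + n * h)) (hh : 0 < h) :
    |h * ∑' n : ℤ, f (a + n * h) - ∫ x, f x| ≤ h ^ 2 / 8 * ∫ x, |f'' x| := by
  obtain ⟨S, hS⟩ := hsum
  have hshift : HasSum (fun n : ℤ => f (a + (n + 1) * h)) S := by
    convert (Equiv.addRight (1 : ℤ)).hasSum_iff.2 hS using 1
    ext n; simp
  have hcells := ((hS.add hshift).mul_left (h / 2)).sub (hfi.hasSum_intervalIntegral_add_mul a hh)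
  rw [hS.tsum_eq, show h * S = h / 2 * (S + S) by ring]
  refine hcells.norm_le_of_bounded
    ((hf''i.abs.hasSum_intervalIntegral_add_mul a hh).mul_left (h ^ 2 / 8)) fun n => ?_
  have hwidth : a + (n + 1) * h - (a + n * h) = h := by ring
  simpa only [Real.norm_eq_abs, hwidth] using
    abs_trapezoid_sub_integral_le (by linarith : a + n * h ≤ a + (n + 1) * h)
      (fun x _ => hf x) (fun x _ => hf' x) hf''i.intervalIntegrable

end Trapezoid

theorem summable_exp_neg_abs_add_mul (a : ℝ) {h : ℝ} (hh : 0 < h) :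
    Summable fun n : ℤ => exp (-|a + n * h|) := by
  have hr : exp (-h) < 1 := exp_lt_one_iff.2 (neg_lt_zero.2 hh)
  have hgeom : Summable fun n : ℕ => exp |a| * exp (-h) ^ n :=
    (summable_geometric_of_lt_one (exp_pos _).le hr).mul_left _
  have hbound : ∀ n : ℤ, exp (-|a + n * h|) ≤ exp |a| * exp (-h) ^ n.natAbs := fun n => by
    have hnh : |(n : ℝ) * h| = n.natAbs * h := by
      rw [abs_mul, abs_of_pos hh, Nat.cast_natAbs, Int.cast_abs]
    rw [← exp_nat_mul, ← exp_add, exp_le_exp]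
    have := abs_sub_abs_le_abs_sub (n * h) (-a)
    rw [abs_neg, sub_neg_eq_add, add_comm] at this
    nlinarith
  refine Summable.of_nonneg_of_le (fun _ => (exp_pos _).le) hbound ?_
  exact .of_nat_of_neg (by simpa using hgeom) (by simpa using hgeom)

def gammaKernel (m x : ℝ) : ℝ := exp (m * x - 2 * exp x)

section GammaKernel

variable {m : ℝ}

theorem gammaKernel_pos (m x : ℝ) : 0 < gammaKernel m x := exp_pos _

theorem gammaKernel_add_one (m x : ℝ) : gammaKernel (m + 1) x = exp x * gammaKernel m x := by
  rw [gammaKernel, gammaKernel, ← exp_add]; ring_nf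

theorem hasDerivAt_gammaKernel (m x : ℝ) :
    HasDerivAt (gammaKernel m) (m * gammaKernel m x - 2 * gammaKernel (m + 1) x) x := by
  have hexponent : HasDerivAt (fun y => m * y - 2 * exp y) (m - 2 * exp x) x := by
    simpa using ((hasDerivAt_id' x).const_mul m).fun_sub ((hasDerivAt_exp x).const_mul 2)
  rw [gammaKernel_add_one]
  exact hexponent.exp.congr_deriv (by rw [gammaKernel]; ring)

theorem deriv_gammaKernel (m : ℝ) :
    deriv (gammaKernel m) = fun x => m * gammaKernel m x - 2 * gammaKernel (m + 1) x :=
  funext fun x => (hasDerivAt_gammaKernel m x).deriv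

theorem hasDerivAt_deriv_gammaKernel (m x : ℝ) :
    HasDerivAt (deriv (gammaKernel m)) (m * (m * gammaKernel m x - 2 * gammaKernel (m + 1) x) -
      2 * ((m + 1) * gammaKernel (m + 1) x - 2 * gammaKernel (m + 1 + 1) x)) x := by
  rw [deriv_gammaKernel]
  exact ((hasDerivAt_gammaKernel m x).const_mul m).fun_sub
    ((hasDerivAt_gammaKernel (m + 1) x).const_mul 2)

theorem gammaKernel_le_exp_neg_abs (hm : 1 ≤ m) (x : ℝ) :
    gammaKernel m x ≤ exp (m ^ 2) * exp (-|x|) := by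
  rw [gammaKernel, ← exp_add, exp_le_exp]
  rcases le_or_gt x 0 with hx | hx
  · rw [abs_of_nonpos hx]
    nlinarith [exp_pos x]
  · rw [abs_of_pos hx]
    nlinarith [quadratic_le_exp_of_nonneg hx.le, sq_nonneg (x - m)]

theorem summable_gammaKernel (hm : 1 ≤ m) (a : ℝ) {h : ℝ} (hh : 0 < h) :
    Summable fun n : ℤ => gammaKernel m (a + n * h) :=
  .of_nonneg_of_le (fun _ => (gammaKernel_pos _ _).le)
    (fun _ => gammaKernel_le_exp_neg_abs hm _) ((summable_exp_neg_abs_add_mul a hh).mul_left _)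

theorem gammaKernel_eq_abs_exp_smul (m x : ℝ) :
    gammaKernel m x = |exp x| • (exp x ^ (m - 1) * exp (-(2 * exp x))) := by
  rw [gammaKernel, smul_eq_mul, abs_of_pos (exp_pos x), rpow_def_of_pos (exp_pos x), log_exp,
    ← exp_add, ← exp_add]
  ring_nf

theorem integrable_gammaKernel (hm : 0 < m) : Integrable (gammaKernel m) := by
  have hdensity : IntegrableOn (fun y : ℝ => y ^ (m - 1) * exp (-(2 * y))) (exp '' univ) := by
    rw [image_univ, range_exp]
    simpa using integrableOn_rpow_mul_exp_neg_mul_rpow (s := m - 1) (by linarith) one_pos two_pos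
  rw [integrableOn_image_iff_integrableOn_abs_deriv_smul MeasurableSet.univ
    (fun x _ => (hasDerivAt_exp x).hasDerivWithinAt) exp_injective.injOn,
    integrableOn_univ] at hdensity
  simpa only [← gammaKernel_eq_abs_exp_smul] using hdensity

theorem integral_gammaKernel (hm : 0 < m) : ∫ x, gammaKernel m x = (1 / 2) ^ m * Gamma m := by
  rw [← integral_rpow_mul_exp_neg_mul_Ioi hm two_pos, ← range_exp, ← image_univ,
    integral_image_eq_integral_abs_deriv_smul MeasurableSet.univ
      (fun x _ => (hasDerivAt_exp x).hasDerivWithinAt) exp_injective.injOn, setIntegral_univ]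
  simp only [gammaKernel_eq_abs_exp_smul]

theorem abs_mul_tsum_gammaKernel_sub_le (hm : 1 ≤ m) (a : ℝ) {h : ℝ} (hh : 0 < h) :
    |h * ∑' n : ℤ, gammaKernel m (a + n * h) - (1 / 2) ^ m * Gamma m| ≤
      h ^ 2 / 8 * ∫ x, |deriv (deriv (gammaKernel m)) x| := by
  have hi₀ := integrable_gammaKernel (m := m) (by linarith)
  have hi₁ := integrable_gammaKernel (m := m + 1) (by linarith)
  have hi₂ := integrable_gammaKernel (m := m + 1 + 1) (by linarith)
  rw [← integral_gammaKernel (by linarith)]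
  refine (abs_mul_tsum_sub_integral_le
    (fun x => (hasDerivAt_gammaKernel m x).differentiableAt.hasDerivAt)
    (hasDerivAt_deriv_gammaKernel m) hi₀ ?_ (summable_gammaKernel hm a hh) hh).trans_eq ?_
  · exact (((hi₀.const_mul m).sub (hi₁.const_mul 2)).const_mul m).sub
      (((hi₁.const_mul (m + 1)).sub (hi₂.const_mul 2)).const_mul 2)
  · rw [funext (fun x => (hasDerivAt_deriv_gammaKernel m x).deriv)]

end GammaKernel

theorem wgt_exp_sq (s : ℕ) (x : ℝ) : wgt s (exp x) ^ 2 = gammaKernel (2 * s) x := by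
  rw [wgt, ← exp_nat_mul, ← exp_add, ← exp_nat_mul, gammaKernel]
  push_cast; ring_nf

theorem tsum_wgt_sq_eq_tsum_gammaKernel (s : ℕ) {t B : ℝ} (ht : 0 < t) (hB : 0 < B) :
    ∑' j : ℤ, wgt s (t * B ^ (-2 * j)) ^ 2 =
      ∑' n : ℤ, gammaKernel (2 * s) (log t + n * (2 * log B)) := by
  rw [← (Equiv.neg ℤ).tsum_eq]
  refine tsum_congr fun j => ?_
  rw [← wgt_exp_sq, ← rpow_intCast, rpow_def_of_pos hB, ← exp_log ht, ← exp_add, log_exp,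
    Equiv.neg_apply]
  push_cast; ring_nf

theorem one_div_two_rpow_mul_Gamma (s : ℕ) :
    (1 / 2 : ℝ) ^ (2 * s : ℝ) * Gamma (2 * s) = Gamma (2 * s) / 2 ^ (2 * s) := by
  rw [show (2 * s : ℝ) = (2 * s : ℕ) by push_cast; ring, rpow_natCast, one_div, inv_pow]
  push_cast; ring

theorem one_le_log_one_div {x : ℝ} (hx : 0 < x) (hxe : x ≤ exp (-1)) : 1 ≤ log (1 / x) := by
  rw [one_div, log_inv, le_neg, ← log_exp (-1)]
  exact log_le_log hx hxe

theorem daubechies_criterion_weight (s : ℕ) (hs : 1 ≤ s) :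
    ∃ C : ℝ, 0 < C ∧ ∃ B₀ : ℝ, 1 < B₀ ∧ B₀ < 2 ∧
      ∀ B : ℝ, 1 < B → B < B₀ → ∀ t : ℝ, 0 < t →
        |2 * Real.log B * ∑' j : ℤ, (wgt s (t * B ^ (-2 * j))) ^ 2
            - Real.Gamma (2 * s) / 2 ^ (2 * s)| ≤
          C * (Real.Gamma (2 * s) / 2 ^ (2 * s)) * (B - 1) ^ 2 * Real.log (1 / (B - 1)) := by
  have hm : (1 : ℝ) ≤ 2 * s := by norm_cast; omega
  set Λ := Gamma (2 * s) / 2 ^ (2 * s)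
  have hΛ : 0 < Λ := div_pos (Gamma_pos_of_pos (by linarith)) (by positivity)
  set J := ∫ x, |deriv (deriv (gammaKernel (2 * s))) x|
  have hJ : 0 ≤ J := integral_nonneg fun _ => abs_nonneg _
  refine ⟨J / (2 * Λ) + 1, by positivity, 5 / 4, by norm_num, by norm_num, fun B hB hB₀ t ht => ?_⟩
  have hlogB : 0 < log B := log_pos hB
  have herr := abs_mul_tsum_gammaKernel_sub_le hm (log t) (by positivity : 0 < 2 * log B)
  rw [one_div_two_rpow_mul_Gamma] at herr
  rw [tsum_wgt_sq_eq_tsum_gammaKernel s ht (by linarith)]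
  have hstep : 2 * log B ≤ 2 * (B - 1) := by linarith [log_le_sub_one_of_pos (by linarith : 0 < B)]
  have hlog : 1 ≤ log (1 / (B - 1)) := by
    refine one_le_log_one_div (by linarith) ?_
    rw [exp_neg]
    linarith [inv_anti₀ (exp_pos 1) (by linarith [exp_one_lt_d9] : exp 1 ≤ 4)]
  calc _ ≤ (2 * log B) ^ 2 / 8 * J := herr
    _ ≤ (2 * (B - 1)) ^ 2 / 8 * J := by gcongr
    _ = J / (2 * Λ) * Λ * (B - 1) ^ 2 * 1 := by field_simp; ring
    _ ≤ (J / (2 * Λ) + 1) * Λ * (B - 1) ^ 2 * log (1 / (B - 1)) := by gcongr; linarith
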